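/- Let A₁ = [[1,0],[0,1]] and A₂ = [[0,1],[0,0]], with dual norm ‖(ω₁,ω₂)‖_A* = sup{|ω₁z₁+ω₂z₂| : ‖z₁A₁+z₂A₂‖_op ≤ 1} on ℂ². Then sup over (ω₁,ω₂) ∈ ℂ² with ‖(ω₁,ω₂)‖_A* ≤ 1 of √(|ω₁|²/2 + |ω₂|²) equals 1. (Equivalently: for every (ω₁,ω₂) with ‖(ω₁,ω₂)‖_A* ≤ 1 one has |ω₁|²/2 + |ω₂|² ≤ 1, and this bound is attained.) -/

import Mathlib

open Matrix
open scoped Matrix.Norms.L2Operator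

/-! The pencil is the Jordan block `!![z₁, z₂; 0, z₁]`, a contraction as soon as
`|z₁|² + |z₂| ≤ 1`. Testing `ω` in the dual unit ball on `z = (t u₁, s u₂)`, with phases `uᵢ`
making `ωᵢ uᵢ = |ωᵢ|` and `t² + s ≤ 1`, gives `|ω₁| t + |ω₂| s ≤ 1`; the choice `t = |ω₁| / 2`
then yields `|ω₁|²/2 + |ω₂|² ≤ 1`. The value 1 is attained at `ω = (0, 1)`, because the entry
`z₂` of a contraction has modulus at most 1. -/

namespace Matrix

variable {𝕜 m n : Type*} [RCLike 𝕜] [Fintype m] [Fintype n] [DecidableEq n]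

lemma norm_apply_le_l2_opNorm (A : Matrix m n 𝕜) (i : m) (j : n) : ‖A i j‖ ≤ ‖A‖ := by
  have hcol : (EuclideanSpace.equiv m 𝕜).symm (A *ᵥ EuclideanSpace.single j 1) i = A i j := by
    simp [EuclideanSpace.single, mulVec_single]
  calc ‖A i j‖ ≤ ‖(EuclideanSpace.equiv m 𝕜).symm (A *ᵥ EuclideanSpace.single j 1)‖ :=
        hcol ▸ PiLp.norm_apply_le _ i
    _ ≤ ‖A‖ * ‖EuclideanSpace.single j (1 : 𝕜)‖ := l2_opNorm_mulVec A _
    _ = ‖A‖ := by simp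

lemma l2_opNorm_le_of_mulVec {A : Matrix m n 𝕜} {C : ℝ} (hC : 0 ≤ C)
    (h : ∀ x : n → 𝕜, ‖WithLp.toLp 2 (A *ᵥ x)‖ ≤ C * ‖WithLp.toLp 2 x‖) : ‖A‖ ≤ C :=
  ContinuousLinearMap.opNorm_le_bound _ hC fun x => h x.ofLp

end Matrix

section JordanBlock

variable {𝕜 : Type*} [RCLike 𝕜]

lemma smul_one_add_smul_nilpotent (z₁ z₂ : 𝕜) :
    z₁ • !![(1 : 𝕜), 0; 0, 1] + z₂ • !![(0 : 𝕜), 1; 0, 0] = !![z₁, z₂; 0, z₁] := by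
  ext i j; fin_cases i <;> fin_cases j <;> simp

lemma norm_jordanBlock_le_one {p q : 𝕜} (h : ‖p‖ ^ 2 + ‖q‖ ≤ 1) : ‖!![p, q; 0, p]‖ ≤ 1 := by
  refine l2_opNorm_le_of_mulVec zero_le_one fun x => ?_
  simp only [EuclideanSpace.norm_eq, Fin.sum_univ_two, one_mul]
  refine Real.sqrt_le_sqrt ?_
  simp only [mulVec, dotProduct, Fin.sum_univ_two, of_apply, cons_val', cons_val_zero,
    cons_val_one, empty_val', cons_val_fin_one, zero_mul, zero_add, norm_mul]
  have htri : ‖p * x 0 + q * x 1‖ ≤ ‖p‖ * ‖x 0‖ + ‖q‖ * ‖x 1‖ :=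
    (norm_add_le _ _).trans_eq (by rw [norm_mul, norm_mul])
  have hq : 0 ≤ ‖q‖ := norm_nonneg q
  nlinarith [pow_le_pow_left₀ (norm_nonneg _) htri 2,
    mul_nonneg hq (sq_nonneg (‖x 0‖ - ‖p‖ * ‖x 1‖)), mul_nonneg (sq_nonneg ‖x 1‖) (sub_nonneg.2 h)]

lemma norm_mul_add_mul_le_of_norm_jordanBlock_le_one (ω₁ ω₂ : 𝕜) {z₁ z₂ : 𝕜}
    (hz : ‖!![z₁, z₂; 0, z₁]‖ ≤ 1) : ‖ω₁ * z₁ + ω₂ * z₂‖ ≤ ‖ω₁‖ + ‖ω₂‖ := by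
  have h₁ : ‖z₁‖ ≤ 1 := by simpa using (norm_apply_le_l2_opNorm _ 0 0).trans hz
  have h₂ : ‖z₂‖ ≤ 1 := by simpa using (norm_apply_le_l2_opNorm _ 0 1).trans hz
  calc ‖ω₁ * z₁ + ω₂ * z₂‖ ≤ ‖ω₁‖ * ‖z₁‖ + ‖ω₂‖ * ‖z₂‖ :=
        (norm_add_le _ _).trans_eq (by rw [norm_mul, norm_mul])
    _ ≤ ‖ω₁‖ + ‖ω₂‖ := by gcongr <;> exact mul_le_of_le_one_right (norm_nonneg _) ‹_›

end JordanBlock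

lemma Complex.exists_norm_eq_one_mul_eq_norm (ω : ℂ) : ∃ u : ℂ, ‖u‖ = 1 ∧ ω * u = ‖ω‖ := by
  refine ⟨Complex.exp (-ω.arg * Complex.I), by exact_mod_cast Complex.norm_exp_ofReal_mul_I _, ?_⟩
  nth_rw 1 [← Complex.norm_mul_exp_arg_mul_I ω]
  rw [mul_assoc, ← Complex.exp_add, ← add_mul, add_neg_cancel, zero_mul, Complex.exp_zero, mul_one]

lemma sq_div_two_add_sq_le_one {a b : ℝ} (ha : 0 ≤ a) (hb : 0 ≤ b)
    (h : ∀ t s : ℝ, 0 ≤ t → 0 ≤ s → t ^ 2 + s ≤ 1 → a * t + b * s ≤ 1) :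
    a ^ 2 / 2 + b ^ 2 ≤ 1 := by
  have ha1 : a ≤ 1 := by simpa using h 1 0 zero_le_one le_rfl (by norm_num)
  have hc : 0 < 1 - a ^ 2 / 4 := by nlinarith
  -- test at `t = a / 2`; the bound then follows from `1 - a²/2 ≤ (1 - a²/4)²`
  have hbc : b * (1 - a ^ 2 / 4) ≤ 1 - a ^ 2 / 2 := by
    have := h (a / 2) (1 - a ^ 2 / 4) (by positivity) hc.le (by ring_nf; rfl)
    linarith
  have hsq : b ^ 2 * (1 - a ^ 2 / 4) ^ 2 ≤ (1 - a ^ 2 / 2) * (1 - a ^ 2 / 4) ^ 2 := calc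
    b ^ 2 * (1 - a ^ 2 / 4) ^ 2 = (b * (1 - a ^ 2 / 4)) ^ 2 := by ring
    _ ≤ (1 - a ^ 2 / 2) ^ 2 := pow_le_pow_left₀ (by positivity) hbc 2
    _ ≤ (1 - a ^ 2 / 2) * (1 - a ^ 2 / 4) ^ 2 := by
      nlinarith [mul_nonneg (by nlinarith : (0 : ℝ) ≤ 1 - a ^ 2 / 2) (sq_nonneg (a ^ 2))]
  linarith [le_of_mul_le_mul_right hsq (by positivity)]

lemma norm_mul_add_norm_mul_le_one_of_forall {ω₁ ω₂ : ℂ}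
    (h : ∀ z₁ z₂ : ℂ, ‖!![z₁, z₂; 0, z₁]‖ ≤ 1 → ‖ω₁ * z₁ + ω₂ * z₂‖ ≤ 1)
    {t s : ℝ} (ht : 0 ≤ t) (hs : 0 ≤ s) (hts : t ^ 2 + s ≤ 1) : ‖ω₁‖ * t + ‖ω₂‖ * s ≤ 1 := by
  obtain ⟨u₁, hu₁, hωu₁⟩ := Complex.exists_norm_eq_one_mul_eq_norm ω₁
  obtain ⟨u₂, hu₂, hωu₂⟩ := Complex.exists_norm_eq_one_mul_eq_norm ω₂
  have hz : ‖!![t * u₁, s * u₂; 0, t * u₁]‖ ≤ 1 := norm_jordanBlock_le_one <| by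
    simpa [norm_mul, hu₁, hu₂, abs_of_nonneg ht, abs_of_nonneg hs] using hts
  have heq : ω₁ * (t * u₁) + ω₂ * (s * u₂) = ((‖ω₁‖ * t + ‖ω₂‖ * s : ℝ) : ℂ) := by
    push_cast
    linear_combination (t : ℂ) * hωu₁ + (s : ℂ) * hωu₂
  have := h _ _ hz
  rwa [heq, Complex.norm_real, Real.norm_of_nonneg (by positivity)] at this

/-- For `A₁ = I₂`, `A₂ = E₁₂`: the supremum of `√(|ω₁|²/2 + |ω₂|²)` over the closed dual
unit ball `‖(ω₁,ω₂)‖_A* ≤ 1` equals `1`, and the bound is attained. -/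
theorem sup_over_dual_ball_eq_one :
    IsGreatest {r : ℝ | ∃ ω₁ ω₂ : ℂ,
        sSup {s : ℝ | ∃ z₁ z₂ : ℂ,
            ‖z₁ • (!![(1 : ℂ), 0; 0, 1]) + z₂ • (!![(0 : ℂ), 1; 0, 0])‖ ≤ 1 ∧
            s = ‖ω₁ * z₁ + ω₂ * z₂‖} ≤ 1 ∧
        r = Real.sqrt (‖ω₁‖ ^ 2 / 2 + ‖ω₂‖ ^ 2)} 1 := by
  simp only [smul_one_add_smul_nilpotent]
  refine ⟨⟨0, 1, Real.sSup_le ?_ zero_le_one, by norm_num⟩, ?_⟩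
  · rintro _ ⟨z₁, z₂, hz, rfl⟩
    simpa using (norm_apply_le_l2_opNorm _ 0 1).trans hz
  · rintro _ ⟨ω₁, ω₂, hω, rfl⟩
    have hbdd : BddAbove {s : ℝ | ∃ z₁ z₂ : ℂ, ‖!![z₁, z₂; 0, z₁]‖ ≤ 1 ∧
        s = ‖ω₁ * z₁ + ω₂ * z₂‖} := ⟨‖ω₁‖ + ‖ω₂‖, by
      rintro _ ⟨z₁, z₂, hz, rfl⟩
      exact norm_mul_add_mul_le_of_norm_jordanBlock_le_one ω₁ ω₂ hz⟩
    have hdual : ∀ z₁ z₂ : ℂ, ‖!![z₁, z₂; 0, z₁]‖ ≤ 1 → ‖ω₁ * z₁ + ω₂ * z₂‖ ≤ 1 :=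
      fun z₁ z₂ hz => (le_csSup hbdd ⟨z₁, z₂, hz, rfl⟩).trans hω
    rw [Real.sqrt_le_one]
    exact sq_div_two_add_sq_le_one (norm_nonneg _) (norm_nonneg _)
      fun t s ht hs hts => norm_mul_add_norm_mul_le_one_of_forall hdual ht hs hts
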